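/- Let α₀ < α₁ be real numbers and M > 0. Let (f_n)_{n≥0} be a sequence of differentiable, nondecreasing functions f_n : [α₀, α₁] → [0, M] with f_0(x) > 0 for all x, and set Σ_n := Σ_{k=0}^{n-1} f_k. Assume f_n'(x) ≥ (n / Σ_n(x)) · f_n(x) for all n ≥ 1 and x ∈ [α₀, α₁]. For n ≥ 2 define T_n(x) := (1/log n) · Σ_{i=1}^{n} f_i(x)/i. Then for all β', β ∈ [α₀, α₁] with β' < β and all n ≥ 2, T_n(β) − T_n(β') ≥ (β − β') · (log Σ_n(β') − log M) / log n. -/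

import Mathlib

open Real

/-!
Write `S_i(x) = ∑_{k<i} f_k(x)`. Since `log (a + b) - log a ≤ b / a`, the differential inequality
gives `log S_{i+1} - log S_i ≤ f_i / S_i ≤ f_i' / i`, and telescoping over `1 ≤ i ≤ n` shows that
`(log n) T_n' ≥ log S_{n+1}(x) - log f_0(x)`. On `[β', β]` this is at least
`log S_n(β') - log M`, because the partial sums are nondecreasing in `x` and `f_0 ≤ M`;
the mean value theorem integrates the bound.
-/

lemma Real.log_add_sub_log_le_div {a b : ℝ} (ha : 0 < a) (hb : 0 ≤ b) :
    log (a + b) - log a ≤ b / a := by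
  have hab : 0 < a + b := by linarith
  rw [← log_div hab.ne' ha.ne']
  calc log ((a + b) / a) ≤ (a + b) / a - 1 := log_le_sub_one_of_pos (div_pos hab ha)
    _ = b / a := by field_simp; ring

lemma log_sum_range_succ_sub_log_le_sum_div (a a' : ℕ → ℝ) (ha : ∀ k, 0 ≤ a k) (ha0 : 0 < a 0)
    (h : ∀ i : ℕ, 1 ≤ i → ((i : ℝ) / ∑ k ∈ Finset.range i, a k) * a i ≤ a' i) (n : ℕ) :
    log (∑ k ∈ Finset.range (n + 1), a k) - log (a 0) ≤ ∑ i ∈ Finset.Icc 1 n, a' i / i := by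
  induction n with
  | zero => simp
  | succ n ih =>
    set S := ∑ k ∈ Finset.range (n + 1), a k
    have hS : 0 < S := ha0.trans_le <| Finset.single_le_sum (fun k _ => ha k) (by simp)
    have hstep : a (n + 1) / S ≤ a' (n + 1) / (n + 1 : ℕ) := by
      rw [le_div_iff₀ (by positivity)]
      calc a (n + 1) / S * (n + 1 : ℕ) = ((n + 1 : ℕ) / S) * a (n + 1) := by ring
        _ ≤ a' (n + 1) := h (n + 1) le_add_self
    have hlog := log_add_sub_log_le_div hS (ha (n + 1))
    rw [Finset.sum_range_succ, Finset.sum_Icc_succ_top (by omega)]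
    linarith

lemma mul_sub_le_sub_of_le_hasDerivWithinAt {a b C : ℝ} {g g' : ℝ → ℝ} (hab : a ≤ b)
    (hg : ∀ x ∈ Set.Icc a b, HasDerivWithinAt g (g' x) (Set.Icc a b) x)
    (hC : ∀ x ∈ Set.Ioo a b, C ≤ g' x) :
    C * (b - a) ≤ g b - g a := by
  have hderiv : ∀ x ∈ interior (Set.Icc a b), HasDerivAt g (g' x) x := fun x hx =>
    (hg x (interior_subset hx)).hasDerivAt (mem_interior_iff_mem_nhds.mp hx)
  refine (convex_Icc a b).mul_sub_le_image_sub_of_le_deriv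
    (fun x hx => (hg x hx).continuousWithinAt)
    (fun x hx => (hderiv x hx).differentiableAt.differentiableWithinAt)
    (fun x hx => ?_) a (Set.left_mem_Icc.mpr hab) b (Set.right_mem_Icc.mpr hab) hab
  rw [(hderiv x hx).deriv]
  exact hC x (by rwa [interior_Icc] at hx)

theorem stmt_8_general (α₀ α₁ M : ℝ)
    (f f' : ℕ → ℝ → ℝ)
    (hderiv : ∀ n, ∀ x ∈ Set.Icc α₀ α₁,
      HasDerivWithinAt (f n) (f' n x) (Set.Icc α₀ α₁) x)
    (hmono : ∀ n, MonotoneOn (f n) (Set.Icc α₀ α₁))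
    (hrange : ∀ n, ∀ x ∈ Set.Icc α₀ α₁, f n x ∈ Set.Icc 0 M)
    (hf0 : ∀ x ∈ Set.Icc α₀ α₁, 0 < f 0 x)
    (hineq : ∀ n, 1 ≤ n → ∀ x ∈ Set.Icc α₀ α₁,
      f' n x ≥ ((n : ℝ) / (∑ k ∈ Finset.range n, f k x)) * f n x) :
    ∀ β' ∈ Set.Icc α₀ α₁, ∀ β ∈ Set.Icc α₀ α₁, β' < β → ∀ n : ℕ, 2 ≤ n →
      (1 / Real.log n) * ∑ i ∈ Finset.Icc 1 n, f i β / i -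
        (1 / Real.log n) * ∑ i ∈ Finset.Icc 1 n, f i β' / i ≥
      (β - β') * (Real.log (∑ k ∈ Finset.range n, f k β') - Real.log M) /
        Real.log n := by
  intro β' hβ' β hβ hlt n hn
  have hsub : Set.Icc β' β ⊆ Set.Icc α₀ α₁ := Set.Icc_subset_Icc hβ'.1 hβ.2
  have hbound : ∀ x ∈ Set.Ioo β' β, log (∑ k ∈ Finset.range n, f k β') - log M ≤
      ∑ i ∈ Finset.Icc 1 n, f' i x / i := by
    intro x hx
    have hx' := hsub (Set.Ioo_subset_Icc_self hx)
    have hpos : 0 < ∑ k ∈ Finset.range n, f k β' :=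
      (hf0 β' hβ').trans_le <|
        Finset.single_le_sum (fun k _ => (hrange k β' hβ').1) (by simp only [Finset.mem_range]; omega)
    have hsum_le : ∑ k ∈ Finset.range n, f k β' ≤ ∑ k ∈ Finset.range (n + 1), f k x := by
      rw [Finset.sum_range_succ]
      linarith [Finset.sum_le_sum fun k (_ : k ∈ Finset.range n) => hmono k hβ' hx' hx.1.le,
        (hrange n x hx').1]
    have htelescope := log_sum_range_succ_sub_log_le_sum_div (f · x) (f' · x) (fun k => (hrange k x hx').1)
      (hf0 x hx') (fun i hi => hineq i hi x hx') n
    linarith [log_le_log hpos hsum_le, log_le_log (hf0 x hx') (hrange 0 x hx').2]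
  have hmvt := mul_sub_le_sub_of_le_hasDerivWithinAt hlt.le
    (g := fun x => ∑ i ∈ Finset.Icc 1 n, f i x / i)
    (fun x hx => HasDerivWithinAt.fun_sum fun i _ => ((hderiv i x (hsub hx)).div_const _).mono hsub)
    hbound
  have hlogn : 0 < log n := log_pos (by exact_mod_cast hn)
  rw [ge_iff_le, ← mul_sub, one_div_mul_eq_div, div_le_div_iff_of_pos_right hlogn]
  linarith

/-- Integrated differential inequality for `T_n`: for `β' < β` and `n ≥ 2`,
`T_n(β) - T_n(β') ≥ (β - β') (log Σ_n(β') - log M) / log n`. -/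
theorem stmt_8 (α₀ α₁ M : ℝ) (hα : α₀ < α₁) (hM : 0 < M)
    (f f' : ℕ → ℝ → ℝ)
    (hderiv : ∀ n, ∀ x ∈ Set.Icc α₀ α₁,
      HasDerivWithinAt (f n) (f' n x) (Set.Icc α₀ α₁) x)
    (hmono : ∀ n, MonotoneOn (f n) (Set.Icc α₀ α₁))
    (hrange : ∀ n, ∀ x ∈ Set.Icc α₀ α₁, f n x ∈ Set.Icc 0 M)
    (hf0 : ∀ x ∈ Set.Icc α₀ α₁, 0 < f 0 x)
    (hineq : ∀ n, 1 ≤ n → ∀ x ∈ Set.Icc α₀ α₁,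
      f' n x ≥ ((n : ℝ) / (∑ k ∈ Finset.range n, f k x)) * f n x) :
    ∀ β' ∈ Set.Icc α₀ α₁, ∀ β ∈ Set.Icc α₀ α₁, β' < β → ∀ n : ℕ, 2 ≤ n →
      (1 / Real.log n) * ∑ i ∈ Finset.Icc 1 n, f i β / i -
        (1 / Real.log n) * ∑ i ∈ Finset.Icc 1 n, f i β' / i ≥
      (β - β') * (Real.log (∑ k ∈ Finset.range n, f k β') - Real.log M) /
        Real.log n :=
  stmt_8_general α₀ α₁ M f f' hderiv hmono hrange hf0 hineq
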